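/- Let α₁, β₁, α₂, β₂ > 0, λ ∈ ℝ, and let s > 0 be a real number. Then ∫₀^∞ e^{−st} · (∑_{k=0}^∞ (− k · ψ(α₂k+β₂)) · λ^k · t^{α₁k+β₁−1} / (Γ(α₁k+β₁) · Γ(α₂k+β₂))) dt = − (1/s^{β₁}) · ∑_{k=0}^∞ (k · ψ(α₂k+β₂) / Γ(α₂k+β₂)) · (λ · s^{−α₁})^k. (The integrand series is the term-by-term derivative with respect to α₂ of t^{β₁−1} E_{(α₁,β₁),(α₂,β₂)}(λ t^{α₁}).) -/

import Mathlib

/-!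
Each term of the series is `c k * t ^ (ρ k - 1)` with `ρ k = α₁ k + β₁`, whose Laplace transform
is `c k * Γ(ρ k) / s ^ ρ k`, so the identity is termwise integration. This is justified as soon as
`∑ |c k| Γ(ρ k) / s ^ ρ k < ∞`, and that sum is the right-hand series with `λ` replaced by `|λ|`.
It converges by the ratio test: convexity of `log Γ` gives `|ψ x| ≤ log x` for `x ≥ 2` and
`Γ(x + a) ≥ Γ x * (x - 1) ^ a`, so along `x = α₂ k + β₂` the Gamma factor beats any geometric one.
-/

open Real MeasureTheory

/-- The digamma function `ψ(x) = the logarithmic derivative of Γ`, i.e. the derivative of `log ∘ Γ`. -/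
noncomputable def digamma (x : ℝ) : ℝ := deriv (fun y : ℝ => Real.log (Real.Gamma y)) x

open Set Filter

lemma differentiableAt_log_Gamma {x : ℝ} (hx : 0 < x) :
    DifferentiableAt ℝ (log ∘ Gamma) x :=
  (differentiableAt_Gamma fun m => by linarith [(m.cast_nonneg : (0 : ℝ) ≤ m)]).log
    (Gamma_pos_of_pos hx).ne'

lemma log_Gamma_add_one {x : ℝ} (hx : 0 < x) :
    (log ∘ Gamma) (x + 1) = (log ∘ Gamma) x + log x := by
  simp only [Function.comp_apply, Gamma_add_one hx.ne', log_mul hx.ne' (Gamma_pos_of_pos hx).ne',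
    add_comm]

lemma digamma_eq_deriv (x : ℝ) : digamma x = deriv (log ∘ Gamma) x := rfl

lemma log_Gamma_add_mul_digamma_le {x a : ℝ} (hx : 0 < x) (ha : 0 < a) :
    (log ∘ Gamma) x + a * digamma x ≤ (log ∘ Gamma) (x + a) := by
  have h := convexOn_log_Gamma.deriv_le_slope hx (by simp; linarith : x + a ∈ Ioi 0)
    (by linarith) (differentiableAt_log_Gamma hx)
  rw [slope_def_field, add_sub_cancel_left, ← digamma_eq_deriv, le_div_iff₀ ha] at h
  linarith

lemma digamma_le_log {x : ℝ} (hx : 0 < x) : digamma x ≤ log x := by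
  have h := log_Gamma_add_mul_digamma_le hx one_pos
  rw [log_Gamma_add_one hx] at h
  linarith

lemma log_sub_one_le_digamma {x : ℝ} (hx : 1 < x) : log (x - 1) ≤ digamma x := by
  have h := convexOn_log_Gamma.slope_le_deriv (by simp; linarith : x - 1 ∈ Ioi 0)
    (by simp; linarith : x ∈ Ioi 0) (by linarith) (differentiableAt_log_Gamma (by linarith))
  have h1 := log_Gamma_add_one (x := x - 1) (by linarith)
  rw [sub_add_cancel] at h1
  rwa [slope_def_field, sub_sub_cancel, div_one, h1, add_sub_cancel_left] at h

lemma abs_digamma_le_log {x : ℝ} (hx : 2 ≤ x) : |digamma x| ≤ log x := by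
  refine abs_le.mpr ⟨?_, digamma_le_log (by linarith)⟩
  linarith [log_sub_one_le_digamma (by linarith : 1 < x), log_nonneg (by linarith : 1 ≤ x - 1),
    log_nonneg (by linarith : 1 ≤ x)]

lemma Gamma_mul_rpow_le_Gamma_add {x a : ℝ} (hx : 1 < x) (ha : 0 < a) :
    Gamma x * (x - 1) ^ a ≤ Gamma (x + a) := by
  have hx₀ : 0 < x := by linarith
  rw [← log_le_log_iff (by positivity) (Gamma_pos_of_pos (by linarith)),
    log_mul (Gamma_pos_of_pos hx₀).ne' (rpow_pos_of_pos (by linarith) a).ne',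
    log_rpow (by linarith)]
  have hconv := log_Gamma_add_mul_digamma_le hx₀ ha
  have hψ := mul_le_mul_of_nonneg_left (log_sub_one_le_digamma hx) ha.le
  simp only [Function.comp_apply] at hconv
  linarith

lemma eventually_mul_Gamma_le_Gamma_add {a : ℝ} (ha : 0 < a) (C : ℝ) :
    ∀ᶠ x in atTop, C * Gamma x ≤ Gamma (x + a) := by
  have hpow : Tendsto (fun x : ℝ => (x - 1) ^ a) atTop atTop :=
    (tendsto_rpow_atTop ha).comp (tendsto_atTop_add_const_right _ _ tendsto_id)
  filter_upwards [hpow.eventually_ge_atTop C, eventually_gt_atTop 1] with x hC hx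
  calc C * Gamma x ≤ (x - 1) ^ a * Gamma x :=
        mul_le_mul_of_nonneg_right hC (Gamma_pos_of_pos (by linarith)).le
    _ ≤ Gamma (x + a) := by rw [mul_comm]; exact Gamma_mul_rpow_le_Gamma_add hx ha

lemma tendsto_mul_natCast_add_atTop {a : ℝ} (ha : 0 < a) (b : ℝ) :
    Tendsto (fun k : ℕ => a * k + b) atTop atTop :=
  tendsto_atTop_add_const_right _ _ (tendsto_natCast_atTop_atTop.const_mul_atTop ha)

lemma summable_natCast_mul_mul_pow_div_Gamma {a : ℝ} (ha : 0 < a) (b r : ℝ) :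
    Summable fun k : ℕ => k * (a * k + b) * r ^ k / Gamma (a * k + b) := by
  refine summable_of_ratio_norm_eventually_le (r := 1 / 2) (by norm_num) ?_
  have hx := tendsto_mul_natCast_add_atTop ha b
  filter_upwards [eventually_ge_atTop 1, hx.eventually_ge_atTop a,
    hx.eventually (eventually_mul_Gamma_le_Gamma_add ha (8 * |r|))] with k hk hxa hΓ
  set x := a * k + b
  have hx₀ : 0 < x := by linarith
  have hΓx : 0 < Gamma x := Gamma_pos_of_pos hx₀
  have hnext : a * ((k + 1 : ℕ) : ℝ) + b = x + a := by push_cast; ring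
  have hnorm : ∀ y : ℝ, 0 < y → ∀ n : ℕ,
      ‖(n : ℝ) * y * r ^ n / Gamma y‖ = n * y * |r| ^ n / Gamma y := fun y hy n => by
    rw [Real.norm_eq_abs, abs_div, abs_mul, abs_mul, abs_pow, Nat.abs_cast, abs_of_pos hy,
      abs_of_pos (Gamma_pos_of_pos hy)]
  rw [hnext, hnorm _ (by linarith), hnorm _ hx₀, div_le_iff₀ (Gamma_pos_of_pos (by linarith))]
  have hk' : (1 : ℝ) ≤ k := by exact_mod_cast hk
  calc ((k + 1 : ℕ) : ℝ) * (x + a) * |r| ^ (k + 1)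
      ≤ (2 * k) * (2 * x) * |r| ^ (k + 1) := by gcongr <;> push_cast <;> linarith
    _ = 1 / 2 * (k * x * |r| ^ k / Gamma x) * (8 * |r| * Gamma x) := by
      field_simp; ring
    _ ≤ 1 / 2 * (k * x * |r| ^ k / Gamma x) * Gamma (x + a) := by gcongr

lemma summable_natCast_mul_digamma_div_Gamma_mul_pow {a : ℝ} (ha : 0 < a) (b r : ℝ) :
    Summable fun k : ℕ => k * digamma (a * k + b) / Gamma (a * k + b) * r ^ k := by
  refine (summable_natCast_mul_mul_pow_div_Gamma ha b |r|).of_norm_bounded_eventually_nat ?_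
  filter_upwards [(tendsto_mul_natCast_add_atTop ha b).eventually_ge_atTop 2] with k hx
  have hΓ : 0 < Gamma (a * k + b) := Gamma_pos_of_pos (by linarith)
  rw [Real.norm_eq_abs, abs_mul, abs_div, abs_mul, Nat.abs_cast, abs_of_pos hΓ, abs_pow,
    div_mul_eq_mul_div]
  gcongr
  exact (abs_digamma_le_log hx).trans (log_le_self (by linarith))

lemma integrableOn_rpow_sub_one_mul_exp_neg_mul {ρ s : ℝ} (hρ : 0 < ρ) (hs : 0 < s) :
    IntegrableOn (fun t : ℝ => t ^ (ρ - 1) * exp (-(s * t))) (Ioi 0) := by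
  simpa only [rpow_one, neg_mul] using
    integrableOn_rpow_mul_exp_neg_mul_rpow (p := 1) (by linarith) one_pos hs

lemma integral_rpow_sub_one_mul_exp_neg_mul {ρ s : ℝ} (hρ : 0 < ρ) (hs : 0 < s) :
    ∫ t in Ioi (0 : ℝ), t ^ (ρ - 1) * exp (-(s * t)) = Gamma ρ / s ^ ρ := by
  rw [integral_rpow_mul_exp_neg_mul_Ioi hρ hs, div_rpow zero_le_one hs.le, one_rpow,
    one_div_mul_eq_div]

theorem integral_exp_neg_mul_mul_tsum_rpow {c ρ : ℕ → ℝ} {s : ℝ} (hs : 0 < s)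
    (hρ : ∀ k, 0 < ρ k) (hsum : Summable fun k => |c k| * Gamma (ρ k) / s ^ ρ k) :
    ∫ t in Ioi (0 : ℝ), exp (-(s * t)) * ∑' k, c k * t ^ (ρ k - 1)
      = ∑' k, c k * Gamma (ρ k) / s ^ ρ k := by
  set F : ℕ → ℝ → ℝ := fun k t => c k * (t ^ (ρ k - 1) * exp (-(s * t)))
  have hF_int : ∀ k, Integrable (F k) (volume.restrict (Ioi 0)) := fun k =>
    (integrableOn_rpow_sub_one_mul_exp_neg_mul (hρ k) hs).const_mul (c k)
  have hF_norm : ∀ k, ∫ t in Ioi (0 : ℝ), ‖F k t‖ = |c k| * Gamma (ρ k) / s ^ ρ k := by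
    intro k
    rw [mul_div_assoc, ← integral_rpow_sub_one_mul_exp_neg_mul (hρ k) hs, ← integral_const_mul]
    refine setIntegral_congr_fun measurableSet_Ioi fun t (ht : 0 < t) => ?_
    have hkernel : 0 ≤ t ^ (ρ k - 1) * exp (-(s * t)) := by positivity
    rw [Real.norm_eq_abs, abs_mul, abs_of_nonneg hkernel]
  have hF_sum := integral_tsum_of_summable_integral_norm hF_int (by simpa only [hF_norm] using hsum)
  calc ∫ t in Ioi (0 : ℝ), exp (-(s * t)) * ∑' k, c k * t ^ (ρ k - 1)
      = ∫ t in Ioi (0 : ℝ), ∑' k, F k t := by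
        congr 1 with t
        rw [← tsum_mul_left]
        exact tsum_congr fun k => by ring
    _ = ∑' k, c k * Gamma (ρ k) / s ^ ρ k := by
        rw [← hF_sum]
        refine tsum_congr fun k => ?_
        rw [integral_const_mul, integral_rpow_sub_one_mul_exp_neg_mul (hρ k) hs, mul_div_assoc]

lemma rpow_mul_natCast_add {x : ℝ} (hx : 0 < x) (a b : ℝ) (k : ℕ) :
    x ^ (a * k + b) = (x ^ a) ^ k * x ^ b := by
  rw [rpow_add hx, rpow_mul_natCast hx.le]

theorem laplace_deriv_alpha2_4ML_general (α₁ β₁ α₂ β₂ lam s : ℝ) (hα₁ : 0 < α₁) (hβ₁ : 0 < β₁)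
    (hα₂ : 0 < α₂) (hs : 0 < s) :
    (∫ t in Set.Ioi (0 : ℝ), Real.exp (-(s * t)) *
        ∑' k : ℕ, (-((k : ℝ) * digamma (α₂ * k + β₂))) * lam ^ k *
          t ^ (α₁ * k + β₁ - 1) /
            (Real.Gamma (α₁ * k + β₁) * Real.Gamma (α₂ * k + β₂)))
      = -((1 / s ^ β₁) *
          ∑' k : ℕ, ((k : ℝ) * digamma (α₂ * k + β₂) / Real.Gamma (α₂ * k + β₂)) *
            (lam * s ^ (-α₁)) ^ k) := by
  set c : ℕ → ℝ := fun k =>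
    -((k : ℝ) * digamma (α₂ * k + β₂)) * lam ^ k / (Gamma (α₁ * k + β₁) * Gamma (α₂ * k + β₂))
  set g : ℕ → ℝ := fun k =>
    1 / s ^ β₁ * ((k : ℝ) * digamma (α₂ * k + β₂) / Gamma (α₂ * k + β₂) * (lam * s ^ (-α₁)) ^ k)
  have hρ : ∀ k : ℕ, 0 < α₁ * k + β₁ := fun k => by positivity
  have hterm : ∀ k : ℕ, c k * Gamma (α₁ * k + β₁) / s ^ (α₁ * k + β₁) = -g k := fun k => by
    have := Gamma_pos_of_pos (hρ k)
    simp only [c, g, rpow_mul_natCast_add hs, rpow_neg hs.le, mul_pow, inv_pow]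
    field_simp
  have hg : Summable g := (summable_natCast_mul_digamma_div_Gamma_mul_pow hα₂ β₂ _).mul_left _
  have hsum : Summable fun k => |c k| * Gamma (α₁ * k + β₁) / s ^ (α₁ * k + β₁) := by
    refine hg.abs.congr fun k => ?_
    rw [← abs_neg, ← hterm, abs_div, abs_mul, abs_of_pos (Gamma_pos_of_pos (hρ k)),
      abs_of_pos (rpow_pos_of_pos hs _)]
  calc _ = ∫ t in Ioi (0 : ℝ), exp (-(s * t)) * ∑' k, c k * t ^ (α₁ * k + β₁ - 1) := by
        simp only [c, mul_div_right_comm _ (_ ^ (_ - 1 : ℝ))]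
    _ = ∑' k, -g k := by
        rw [integral_exp_neg_mul_mul_tsum_rpow hs hρ hsum]
        exact tsum_congr hterm
    _ = _ := by rw [tsum_neg, tsum_mul_left]

theorem laplace_deriv_alpha2_4ML (α₁ β₁ α₂ β₂ lam s : ℝ) (hα₁ : 0 < α₁) (hβ₁ : 0 < β₁)
    (hα₂ : 0 < α₂) (hβ₂ : 0 < β₂) (hs : 0 < s) :
    (∫ t in Set.Ioi (0 : ℝ), Real.exp (-(s * t)) *
        ∑' k : ℕ, (-((k : ℝ) * digamma (α₂ * k + β₂))) * lam ^ k *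
          t ^ (α₁ * k + β₁ - 1) /
            (Real.Gamma (α₁ * k + β₁) * Real.Gamma (α₂ * k + β₂)))
      = -((1 / s ^ β₁) *
          ∑' k : ℕ, ((k : ℝ) * digamma (α₂ * k + β₂) / Real.Gamma (α₂ * k + β₂)) *
            (lam * s ^ (-α₁)) ^ k) :=
  laplace_deriv_alpha2_4ML_general α₁ β₁ α₂ β₂ lam s hα₁ hβ₁ hα₂ hs
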